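/- arXiv:1701.03751 — 7 statements merged into one kernel-verified Lean document; each statement's English description precedes it below -/
import Mathlib

section
/- Let n be a natural number and let 𝒰 be a union closed set on Ω_n with 𝒰 ≠ {Ω_n, ∅}. Let A be the largest non-empty element of 𝒰 with respect to the order < (i.e., every non-empty B ∈ 𝒰 with B ≠ A satisfies B < A). Then 𝒰 \ {A} is again a union closed set on Ω_n. -/
/-- Binary encoding of a subset `A ⊆ Ω_n = {1,…,n}` (modeled as `Finset (Fin n)`):
`b(A) = Σ_{i∈A} 2^(i-1)`. -/
def bcode {n : ℕ} (A : Finset (Fin n)) : ℕ := ∑ i ∈ A, 2 ^ (i : ℕ)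

/-- The order on subsets of `Ω_n`: `A < B` iff `B` has fewer elements than `A`
(sets with more elements are smaller), or they have the same number of elements
and `b(A) < b(B)`. -/
def setLT {n : ℕ} (A B : Finset (Fin n)) : Prop :=
  B.card < A.card ∨ (A.card = B.card ∧ bcode A < bcode B)

/-- A union closed set on `Ω_n`: a family of subsets of `Ω_n` closed under
pairwise unions that contains the full set `Ω_n` and the empty set. -/
def IsUCS {n : ℕ} (U : Finset (Finset (Fin n))) : Prop :=
  (∀ A ∈ U, ∀ B ∈ U, A ∪ B ∈ U) ∧ Finset.univ ∈ U ∧ ∅ ∈ U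

/-!
Since the order puts larger sets below smaller ones, every non-empty member of `𝒰` other than `A`
has at least `|A|` elements. Hence `A ≠ Ω_n` (otherwise `𝒰 = {Ω_n, ∅}`), and the only member
strictly inside `A` is `∅`, so `A` is not the union of two members different from it.
-/

open Finset

theorem card_le_of_setLT {n : ℕ} {A B : Finset (Fin n)} (h : setLT A B) : B.card ≤ A.card := by
  rcases h with h | ⟨h, -⟩ <;> omega

theorem not_setLT_univ {n : ℕ} (B : Finset (Fin n)) : ¬ setLT B univ := by
  rintro (h | ⟨h, hb⟩)
  · exact h.not_ge (card_le_univ B |>.trans_eq card_univ.symm)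
  · rw [eq_univ_of_card B (h.trans card_univ)] at hb
    exact hb.false

theorem eq_or_eq_of_union_eq_of_forall_ssubset {α : Type*} [DecidableEq α]
    {U : Finset (Finset α)} {A B C : Finset α} (hsmall : ∀ D ∈ U, D ⊂ A → D = ∅)
    (hB : B ∈ U) (hBC : B ∪ C = A) : B = A ∨ C = A := by
  refine or_iff_not_imp_left.2 fun hBA => ?_
  have hB_empty : B = ∅ := hsmall B hB <| (hBC ▸ subset_union_left).ssubset_of_ne hBA
  simpa [hB_empty] using hBC

namespace IsUCS

variable {n : ℕ} {U : Finset (Finset (Fin n))}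

theorem eq_pair (hU : IsUCS U) (h : ∀ B ∈ U, B = univ ∨ B = ∅) : U = {univ, ∅} := by
  refine Subset.antisymm (fun B hB => by simpa using h B hB) ?_
  simp [insert_subset_iff, hU.2.1, hU.2.2]

theorem erase (hU : IsUCS U) {A : Finset (Fin n)} (hA_univ : A ≠ univ) (hA_empty : A ≠ ∅)
    (hirr : ∀ B ∈ U, ∀ C ∈ U, B ∪ C = A → B = A ∨ C = A) : IsUCS (U.erase A) := by
  refine ⟨fun B hB C hC => ?_, mem_erase.2 ⟨hA_univ.symm, hU.2.1⟩,
    mem_erase.2 ⟨hA_empty.symm, hU.2.2⟩⟩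
  rw [mem_erase] at hB hC ⊢
  refine ⟨fun hBC => ?_, hU.1 B hB.2 C hC.2⟩
  rcases hirr B hB.2 C hC.2 hBC with h | h
  exacts [hB.1 h, hC.1 h]

end IsUCS

theorem ucs_erase_largest_general {n : ℕ} (U : Finset (Finset (Fin n))) (hU : IsUCS U)
    (hne : U ≠ {Finset.univ, ∅}) (A : Finset (Fin n)) (hAne : A ≠ ∅)
    (hmax : ∀ B ∈ U, B ≠ ∅ → B ≠ A → setLT B A) :
    IsUCS (U.erase A) := by
  have hsmall : ∀ B ∈ U, B ⊂ A → B = ∅ := fun B hB hBA => by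
    by_contra hB_empty
    exact (card_lt_card hBA).not_ge (card_le_of_setLT (hmax B hB hB_empty hBA.ne))
  have hA_univ : A ≠ univ := by
    rintro rfl
    refine hne (hU.eq_pair fun B hB => ?_)
    by_contra! h
    exact not_setLT_univ B (hmax B hB h.2.ne_empty h.1)
  exact hU.erase hA_univ hAne fun B hB C _ => eq_or_eq_of_union_eq_of_forall_ssubset hsmall hB

/-- If `𝒰 ≠ {Ω_n, ∅}` is a union closed set and `A` is the largest non-empty
element of `𝒰`, then `𝒰 \ {A}` is again a union closed set. -/
theorem ucs_erase_largest {n : ℕ} (U : Finset (Finset (Fin n))) (hU : IsUCS U)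
    (hne : U ≠ {Finset.univ, ∅}) (A : Finset (Fin n)) (hA : A ∈ U) (hAne : A ≠ ∅)
    (hmax : ∀ B ∈ U, B ≠ ∅ → B ≠ A → setLT B A) :
    IsUCS (U.erase A) :=
  ucs_erase_largest_general U hU hne A hAne hmax
end

section
/- Let 𝒰 be a union closed set on Ω_n and let A ⊆ Ω_n be a set that is larger (in the order <) than every non-empty set in 𝒰. Then 𝒰 ∪ {A} is closed under pairwise unions if and only if A ∪ B ∈ 𝒰 for every B ∈ red(𝒰). -/
/-- The reduced set of a union closed set `𝒰`: the non-empty members of `𝒰`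
that do not strictly contain another non-empty member of `𝒰`. -/
def redSet {n : ℕ} (U : Finset (Finset (Fin n))) : Finset (Finset (Fin n)) :=
  U.filter (fun A => A ≠ ∅ ∧ ∀ A₁ ∈ U, A₁ ≠ ∅ → ¬ A₁ ⊂ A)

/-!
A set `B` that `A` exceeds in the order `<` cannot lie inside `A`, so the union `A ∪ B` of `A` with
a reduced set `B` is never `A` itself and must already lie in `𝒰`. Conversely every non-empty
`Y ∈ 𝒰` contains some `B ∈ red(𝒰)`, and then `A ∪ Y = (A ∪ B) ∪ Y ∈ 𝒰` by union-closedness.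
-/

open Finset

lemma not_subset_of_setLT {n : ℕ} {A B : Finset (Fin n)} (h : setLT B A) : ¬ B ⊆ A := by
  intro hBA
  rcases h with hcard | ⟨hcard, hcode⟩
  · exact (card_le_card hBA).not_gt hcard
  · obtain rfl : B = A := eq_of_subset_of_card_le hBA hcard.ge
    exact hcode.false

lemma exists_mem_redSet_subset {n : ℕ} {U : Finset (Finset (Fin n))} {Y : Finset (Fin n)}
    (hY : Y ∈ U) (hne : Y ≠ ∅) : ∃ B ∈ redSet U, B ⊆ Y := by
  induction Y using Finset.strongInduction with
  | _ Y ih =>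
    by_cases hsmaller : ∃ Z ∈ U, Z ≠ ∅ ∧ Z ⊂ Y
    · obtain ⟨Z, hZ, hZne, hZY⟩ := hsmaller
      obtain ⟨B, hB, hBZ⟩ := ih Z hZY hZ hZne
      exact ⟨B, hB, hBZ.trans hZY.subset⟩
    · exact ⟨Y, mem_filter.2 ⟨hY, hne, fun Z hZ hZne hZY => hsmaller ⟨Z, hZ, hZne, hZY⟩⟩, subset_rfl⟩

lemma union_mem_of_forall_redSet {n : ℕ} {U : Finset (Finset (Fin n))} {A Y : Finset (Fin n)}
    (hclosed : ∀ X ∈ U, ∀ Y ∈ U, X ∪ Y ∈ U) (hred : ∀ B ∈ redSet U, A ∪ B ∈ U)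
    (hY : Y ∈ U) (hne : Y ≠ ∅) : A ∪ Y ∈ U := by
  obtain ⟨B, hB, hBY⟩ := exists_mem_redSet_subset hY hne
  have hAY : A ∪ B ∪ Y = A ∪ Y := by rw [union_assoc, union_eq_right.2 hBY]
  exact hAY ▸ hclosed _ (hred B hB) _ hY

lemma insert_unionClosed_iff {α : Type*} [DecidableEq α] {U : Finset (Finset α)} {A : Finset α}
    (hclosed : ∀ X ∈ U, ∀ Y ∈ U, X ∪ Y ∈ U) :
    (∀ X ∈ insert A U, ∀ Y ∈ insert A U, X ∪ Y ∈ insert A U) ↔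
      ∀ Y ∈ U, A ∪ Y ∈ insert A U := by
  refine ⟨fun h Y hY => h A (mem_insert_self A U) Y (mem_insert_of_mem hY), fun h X hX Y hY => ?_⟩
  rcases mem_insert.1 hX with rfl | hXU <;> rcases mem_insert.1 hY with rfl | hYU
  · simp
  · exact h Y hYU
  · rw [union_comm]; exact h X hXU
  · exact mem_insert_of_mem (hclosed X hXU Y hYU)

/-- If `𝒰` is a union closed set and `A ⊆ Ω_n` is larger (in the order `<`) than
every non-empty set in `𝒰`, then `𝒰 ∪ {A}` is closed under pairwise unions if and
only if `A ∪ B ∈ 𝒰` for every `B ∈ red(𝒰)`. -/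
theorem insert_unionClosed_iff_red {n : ℕ} (U : Finset (Finset (Fin n))) (hU : IsUCS U)
    (A : Finset (Fin n)) (hlarger : ∀ B ∈ U, B ≠ ∅ → setLT B A) :
    (∀ X ∈ insert A U, ∀ Y ∈ insert A U, X ∪ Y ∈ insert A U) ↔
      (∀ B ∈ redSet U, A ∪ B ∈ U) := by
  rw [insert_unionClosed_iff hU.1]
  constructor
  · intro h B hB
    obtain ⟨hBU, hBne, -⟩ := mem_filter.1 hB
    rcases mem_insert.1 (h B hBU) with hAB | hAB
    · exact absurd (hAB ▸ subset_union_right) (not_subset_of_setLT (hlarger B hBU hBne))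
    · exact hAB
  · intro hred Y hY
    by_cases hne : Y = ∅
    · simp [hne]
    · exact mem_insert_of_mem (union_mem_of_forall_redSet hU.1 hred hY hne)
end

section
/- Let 𝒰 ≠ {Ω_n, ∅} be a union closed set on Ω_n that is the canonical representative of its isomorphism class, and write its non-empty members as A₁ < A₂ < ⋯ < A_k in the order <. Then for every m with 1 ≤ m ≤ k, the family {A₁, A₂, …, A_m, ∅} is also the canonical representative of its isomorphism class. -/
/-- A numeric key encoding the order `setLT`: since `bcode A < 2^n`, we have
`setLT A B ↔ key A < key B`. -/
def key {n : ℕ} (A : Finset (Fin n)) : ℕ := (n - A.card) * 2 ^ n + bcode A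

/-- The action of a permutation `Π` of `Ω_n` on a family of sets:
each element of each set is replaced by its image under `Π`. -/
def permFam {n : ℕ} (π : Equiv.Perm (Fin n)) (U : Finset (Finset (Fin n))) :
    Finset (Finset (Fin n)) := U.image (fun A => A.image π)

/-- The string `s(𝒰)` of a family `𝒰`: the keys of the non-empty members
listed in increasing order `A₁ < A₂ < ⋯ < A_k` (w.r.t. `setLT`). -/
def sStr {n : ℕ} (U : Finset (Finset (Fin n))) : List ℕ :=
  ((U.filter (fun A => A ≠ ∅)).image key).sort (· ≤ ·)

/-- A family `𝒰` is canonical if `s(𝒰)` is lexicographically ≤ `s(Π(𝒰))` for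
every permutation `Π` of `Ω_n`, i.e. no permutation yields a lexicographically
smaller string. -/
def IsCanonical {n : ℕ} (U : Finset (Finset (Fin n))) : Prop :=
  ∀ π : Equiv.Perm (Fin n), ¬ List.Lex (· < ·) (sStr (permFam π U)) (sStr U)

/-! A permutation preserves the number of non-empty members, and `s(·)` is sorted, so the
string of `Π({A₁, …, A_m, ∅})` is a sublist of length `m` of the sorted string of `Π(𝒰)`.
Its `i`-th entry therefore dominates the `i`-th entry of `s(Π(𝒰))`; hence if it were
lexicographically smaller than `s({A₁, …, A_m, ∅}) = (b(A₁), …, b(A_m))`, which is a prefix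
of `s(𝒰)`, then `s(Π(𝒰))` would be lexicographically smaller than `s(𝒰)`. -/

open Finset List

section SortedLists

variable {α : Type*} [LinearOrder α]

theorem Finset.sort_sublist_sort_of_subset {s t : Finset α} (h : s ⊆ t) :
    s.sort (· ≤ ·) <+ t.sort (· ≤ ·) := by
  apply List.sublist_of_subperm_of_pairwise _ (pairwise_sort _ _) (pairwise_sort _ _)
  rw [← Multiset.coe_le, sort_eq, sort_eq]
  exact val_le_iff.2 h

theorem Finset.sort_eq_sort_append_sort_sdiff {s t : Finset α} (hst : s ⊆ t)
    (h : ∀ x ∈ s, ∀ y ∈ t \ s, x ≤ y) :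
    t.sort (· ≤ ·) = s.sort (· ≤ ·) ++ (t \ s).sort (· ≤ ·) := by
  refine List.Perm.eq_of_pairwise' (pairwise_sort _ _) ?_ ?_
  · rw [List.pairwise_append]
    exact ⟨pairwise_sort _ _, pairwise_sort _ _,
      fun x hx y hy => h x ((mem_sort _).1 hx) y ((mem_sort _).1 hy)⟩
  · rw [← Multiset.coe_eq_coe, ← Multiset.coe_add, sort_eq, sort_eq, sort_eq, sdiff_val,
      add_comm, tsub_add_cancel_of_le (val_le_iff.2 hst)]

theorem List.Lex.append_right_of_sublist {P Q : List α} (hPQ : Lex (· < ·) P Q) {A : List α}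
    (hA : A.Pairwise (· ≤ ·)) (hPA : P <+ A) (hlen : P.length = Q.length) (R : List α) :
    Lex (· < ·) A (Q ++ R) := by
  induction hPQ generalizing A with
  | nil => simp at hlen
  | @rel a _ b _ hab =>
    obtain _ | ⟨c, A⟩ := A
    · simp at hPA
    have hca : c ≤ a := hA.rel_head (hPA.subset mem_cons_self)
    exact Lex.rel (hca.trans_lt hab)
  | @cons a P Q _ ih =>
    obtain _ | ⟨c, A⟩ := A
    · simp at hPA
    have hca : c ≤ a := hA.rel_head (hPA.subset mem_cons_self)
    rcases hca.lt_or_eq with hca | rfl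
    · exact Lex.rel hca
    · exact Lex.cons (ih (pairwise_cons.1 hA).2 (cons_sublist_cons.1 hPA)
        (by simpa using hlen))

end SortedLists

section Encoding

variable {n : ℕ}

theorem bcode_eq_sum_map (A : Finset (Fin n)) :
    bcode A = ∑ i ∈ A.map Fin.valEmbedding, 2 ^ i :=
  (sum_map A Fin.valEmbedding _).symm

theorem bcode_injective : Function.Injective (bcode (n := n)) := by
  intro A B h
  rw [bcode_eq_sum_map, bcode_eq_sum_map] at h
  exact map_injective Fin.valEmbedding (geomSum_injective le_rfl h)

theorem bcode_lt_two_pow (A : Finset (Fin n)) : bcode A < 2 ^ n := by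
  rw [bcode_eq_sum_map]
  exact Nat.geomSum_lt le_rfl (by simp)

theorem key_lt_key_of_setLT {A B : Finset (Fin n)} (h : setLT A B) : key A < key B := by
  have hA : #A ≤ n := by simpa using card_le_univ A
  have hB : #B ≤ n := by simpa using card_le_univ B
  have hbA := bcode_lt_two_pow A
  rcases h with hcard | ⟨hcard, hb⟩
  · calc key A < (n - #A) * 2 ^ n + 2 ^ n := by unfold key; omega
      _ = (n - #A + 1) * 2 ^ n := by ring
      _ ≤ (n - #B) * 2 ^ n := Nat.mul_le_mul_right _ (by omega)
      _ ≤ key B := Nat.le_add_right _ _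
  · unfold key; rw [hcard]; omega

theorem setLT_or_setLT_of_ne {A B : Finset (Fin n)} (h : A ≠ B) : setLT A B ∨ setLT B A := by
  rcases Nat.lt_trichotomy #A #B with hc | hc | hc
  · exact Or.inr (Or.inl hc)
  · rcases Nat.lt_trichotomy (bcode A) (bcode B) with hb | hb | hb
    · exact Or.inl (Or.inr ⟨hc, hb⟩)
    · exact absurd (bcode_injective hb) h
    · exact Or.inr (Or.inr ⟨hc.symm, hb⟩)
  · exact Or.inl (Or.inl hc)

theorem key_injective : Function.Injective (key (n := n)) := by
  intro A B h
  by_contra hne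
  rcases setLT_or_setLT_of_ne hne with hAB | hBA
  · exact (key_lt_key_of_setLT hAB).ne h
  · exact (key_lt_key_of_setLT hBA).ne' h

end Encoding

section Strings

variable {n : ℕ}

theorem sStr_insert_empty (U : Finset (Finset (Fin n))) : sStr (insert ∅ U) = sStr U := by
  simp [sStr, filter_insert]

theorem permFam_insert_empty (π : Equiv.Perm (Fin n)) (U : Finset (Finset (Fin n))) :
    permFam π (insert ∅ U) = insert ∅ (permFam π U) := by
  simp [permFam, image_insert]

theorem length_sStr (U : Finset (Finset (Fin n))) :
    (sStr U).length = #(U.filter (· ≠ ∅)) := by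
  rw [sStr, length_sort, card_image_of_injective _ key_injective]

theorem length_sStr_permFam (π : Equiv.Perm (Fin n)) (U : Finset (Finset (Fin n))) :
    (sStr (permFam π U)).length = (sStr U).length := by
  have hinj : Function.Injective (fun A : Finset (Fin n) => A.image π) :=
    image_injective π.injective
  rw [length_sStr, length_sStr, permFam, filter_image,
    card_image_of_injective _ hinj]
  simp

theorem sStr_sublist_of_subset {U V : Finset (Finset (Fin n))} (h : V ⊆ U) :
    sStr V <+ sStr U :=
  sort_sublist_sort_of_subset (image_subset_image (filter_subset_filter _ h))

theorem sStr_prefix_of_initial {U V : Finset (Finset (Fin n))} (hVU : V ⊆ U)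
    (hinit : ∀ A ∈ V, ∀ B ∈ U, B ≠ ∅ → setLT B A → B ∈ V) :
    sStr V <+: sStr U := by
  have hsub : (V.filter (· ≠ ∅)).image key ⊆ (U.filter (· ≠ ∅)).image key :=
    image_subset_image (filter_subset_filter _ hVU)
  refine ⟨_, (sort_eq_sort_append_sort_sdiff hsub ?_).symm⟩
  intro x hx y hy
  obtain ⟨A, hA, rfl⟩ := mem_image.1 hx
  obtain ⟨hyU, hyV⟩ := mem_sdiff.1 hy
  obtain ⟨B, hB, rfl⟩ := mem_image.1 hyU
  obtain ⟨hBU, hBne⟩ := mem_filter.1 hB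
  have hBV : B ∉ V := fun h => hyV (mem_image_of_mem key (mem_filter.2 ⟨h, hBne⟩))
  have hAV : A ∈ V := (mem_filter.1 hA).1
  rcases setLT_or_setLT_of_ne (ne_of_mem_of_not_mem hAV hBV) with hAB | hBA
  · exact (key_lt_key_of_setLT hAB).le
  · exact absurd (hinit A hAV B hBU hBne hBA) hBV

end Strings

theorem canonical_initial_segment_general {n : ℕ} (U : Finset (Finset (Fin n)))
    (hcan : IsCanonical U)
    (V : Finset (Finset (Fin n))) (hVsub : V ⊆ U)
    (hVinit : ∀ A ∈ V, ∀ B ∈ U, B ≠ ∅ → setLT B A → B ∈ V) :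
    IsCanonical (insert ∅ V) := by
  intro π hlex
  rw [permFam_insert_empty, sStr_insert_empty, sStr_insert_empty] at hlex
  obtain ⟨R, hR⟩ := sStr_prefix_of_initial hVsub hVinit
  refine hcan π ?_
  rw [← hR]
  exact hlex.append_right_of_sublist (pairwise_sort _ _)
    (sStr_sublist_of_subset (image_subset_image hVsub)) (length_sStr_permFam π V) R

/-- If `𝒰 ≠ {Ω_n, ∅}` is a canonical union closed set with non-empty members
`A₁ < A₂ < ⋯ < A_k`, then for every `1 ≤ m ≤ k` the family `{A₁, …, A_m, ∅}` is
also canonical. Here `{A₁, …, A_m}` is expressed as a non-empty initial segment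
`V` of the non-empty members of `𝒰` w.r.t. the order `setLT`. -/
theorem canonical_initial_segment {n : ℕ} (U : Finset (Finset (Fin n))) (hU : IsUCS U)
    (hne : U ≠ {Finset.univ, ∅}) (hcan : IsCanonical U)
    (V : Finset (Finset (Fin n))) (hVsub : V ⊆ U) (hVempty : ∅ ∉ V) (hVne : V.Nonempty)
    (hVinit : ∀ A ∈ V, ∀ B ∈ U, B ≠ ∅ → setLT B A → B ∈ V) :
    IsCanonical (insert ∅ V) :=
  canonical_initial_segment_general U hcan V hVsub hVinit
end

section
/- Let 𝒰 be a union closed set on Ω_n and let A ⊆ Ω_n be larger (in the order <) than every non-empty set in 𝒰, such that 𝒰' = 𝒰 ∪ {A} is again closed under unions. Then red(𝒰') = {A} ∪ { B ∈ red(𝒰) | A ⊄ B }, i.e., red(𝒰') is obtained from red(𝒰) by adding A and removing those elements that strictly contain A. -/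
/-- Let `𝒰` be a union closed set and let `A` be a (new, hence non-empty) set
larger in the order `<` than every non-empty set in `𝒰`, such that `𝒰' = 𝒰 ∪ {A}`
is again closed under unions. Then `red(𝒰')` is obtained from `red(𝒰)` by adding
`A` and removing those elements that strictly contain `A`:
`red(𝒰') = {A} ∪ { B ∈ red(𝒰) | ¬ A ⊊ B }`. -/
theorem redSet_insert {n : ℕ} (U : Finset (Finset (Fin n))) (hU : IsUCS U)
    (A : Finset (Fin n)) (hAnotin : A ∉ U)
    (hlarger : ∀ B ∈ U, B ≠ ∅ → setLT B A)
    (hclosed : ∀ X ∈ insert A U, ∀ Y ∈ insert A U, X ∪ Y ∈ insert A U) :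
    redSet (insert A U) = insert A ((redSet U).filter (fun B => ¬ A ⊂ B)) := by
  have hAne : A ≠ ∅ := fun h => hAnotin (h ▸ hU.2.2)
  ext X
  simp only [redSet, Finset.mem_filter, Finset.mem_insert]
  constructor
  · rintro ⟨hX | hX, hXne, hmin⟩
    · exact Or.inl hX
    · exact Or.inr ⟨⟨hX, hXne, fun A₁ hA₁ hA₁ne => hmin A₁ (Or.inr hA₁) hA₁ne⟩,
        hmin A (Or.inl rfl) hAne⟩
  · rintro (rfl | ⟨⟨hX, hXne, hmin⟩, hAX⟩)
    · refine ⟨Or.inl rfl, hAne, ?_⟩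
      rintro A₁ (rfl | h1) h1ne hsub
      · exact ssubset_irrefl _ hsub
      · have hc := Finset.card_lt_card hsub
        rcases hlarger A₁ h1 h1ne with h | ⟨h, _⟩ <;> omega
    · refine ⟨Or.inr hX, hXne, ?_⟩
      rintro A₁ (rfl | h1) h1ne
      · exact hAX
      · exact hmin A₁ h1 h1ne
end

section
/- Let 𝒰 be a union closed set on Ω_n that is not sparse, i.e., the average cardinality of the non-empty members of 𝒰 is strictly greater than n/2 (equivalently, 2 · Σ_{A ∈ 𝒰, A ≠ ∅} |A| > n · |{A ∈ 𝒰 | A ≠ ∅}|). Then the union closed sets conjecture holds for 𝒰: there exists an element x ∈ Ω_n that belongs to at least half of the non-empty members of 𝒰. -/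
/-!
Double counting the incidences `x ∈ A` shows that the total size of the non-empty members
is the sum over `x` of the number of members containing `x`. If every `x` lay in fewer than
half of the non-empty members, this total would be less than `n/2` times their number.
-/

open Finset

namespace Finset

variable {α : Type*} [Fintype α] [DecidableEq α]

theorem sum_card_eq_sum_card_filter_mem (B : Finset (Finset α)) :
    ∑ s ∈ B, #s = ∑ a, #{b ∈ B | a ∈ b} := by
  simp only [card_eq_sum_ones, sum_filter]
  rw [sum_comm]
  refine sum_congr rfl fun s _ => ?_
  rw [← sum_filter, filter_mem_eq_inter, univ_inter]

theorem exists_lt_two_mul_card_filter_mem {B : Finset (Finset α)}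
    (h : Fintype.card α * #B < 2 * ∑ s ∈ B, #s) : ∃ a, #B < 2 * #{b ∈ B | a ∈ b} := by
  have hsum : ∑ _a : α, #B < ∑ a, 2 * #{b ∈ B | a ∈ b} := by
    rwa [sum_const, card_univ, smul_eq_mul, ← mul_sum, ← sum_card_eq_sum_card_filter_mem]
  obtain ⟨a, -, ha⟩ := exists_lt_of_sum_lt hsum
  exact ⟨a, ha⟩

end Finset

theorem frankl_of_not_sparse_general {n : ℕ}
    (U : Finset (Finset (Fin n)))
    (hdense : n * (U.filter (fun A => A ≠ ∅)).card
      < 2 * ∑ A ∈ U.filter (fun A => A ≠ ∅), A.card) :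
    ∃ x : Fin n, (U.filter (fun A => A ≠ ∅)).card ≤ 2 * (U.filter (fun A => x ∈ A)).card := by
  obtain ⟨x, hx⟩ := exists_lt_two_mul_card_filter_mem (by rwa [Fintype.card_fin])
  refine ⟨x, hx.le.trans (Nat.mul_le_mul_left 2 (card_le_card fun A hA => ?_))⟩
  simp only [mem_filter] at hA ⊢
  exact ⟨hA.1.1, hA.2⟩

/-- If a union closed set `𝒰` on `Ω_n` is not sparse, i.e. the average
cardinality of its non-empty members is strictly greater than `n/2`
(equivalently `2 · Σ_{∅≠A∈𝒰} |A| > n · #{A ∈ 𝒰 | A ≠ ∅}`), then the union closed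
sets conjecture holds for `𝒰`: some element `x ∈ Ω_n` belongs to at least half
of the non-empty members of `𝒰`. -/
theorem frankl_of_not_sparse {n : ℕ} (hn : 1 ≤ n)
    (U : Finset (Finset (Fin n))) (hU : IsUCS U)
    (hdense : n * (U.filter (fun A => A ≠ ∅)).card
      < 2 * ∑ A ∈ U.filter (fun A => A ≠ ∅), A.card) :
    ∃ x : Fin n, (U.filter (fun A => A ≠ ∅)).card ≤ 2 * (U.filter (fun A => x ∈ A)).card :=
  frankl_of_not_sparse_general U hdense
end

section
/- For every n ∈ ℕ, the number of Moore families on Ω_n equals Σ_{i=0}^{n} C(n,i) · u_i, where u_i is the number of union closed sets on Ω_i (i.e., families of subsets of a fixed i-element set that contain the empty set and the full set and are closed under pairwise unions) and C(n,i) is the binomial coefficient. -/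
/-- The number of labeled union closed sets on `Ω_i`: families of subsets of an
`i`-element set that contain the empty set and the full set and are closed under
pairwise unions. -/
def numUCS (i : ℕ) : ℕ :=
  ((Finset.univ : Finset (Finset (Finset (Fin i)))).filter
    (fun U => (∀ A ∈ U, ∀ B ∈ U, A ∪ B ∈ U) ∧ Finset.univ ∈ U ∧ ∅ ∈ U)).card

/-- The number of labeled Moore families on `Ω_n`: families of subsets of an
`n`-element set that are closed under pairwise intersections and contain the
full set. -/
def numMoore (n : ℕ) : ℕ :=
  ((Finset.univ : Finset (Finset (Finset (Fin n)))).filter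
    (fun M => (∀ A ∈ M, ∀ B ∈ M, A ∩ B ∈ M) ∧ Finset.univ ∈ M)).card

open Finset

/-- Step 1: complementation turns Moore families into union-closed families
containing the empty set. -/
lemma numMoore_eq_card_uc (n : ℕ) :
    numMoore n = ((univ : Finset (Finset (Finset (Fin n)))).filter
      (fun U => (∀ A ∈ U, ∀ B ∈ U, A ∪ B ∈ U) ∧ ∅ ∈ U)).card := by
  unfold numMoore
  apply Finset.card_bij' (fun M _ => M.image (fun A => Aᶜ))
    (fun U _ => U.image (fun A => Aᶜ))
  case hi =>
    intro M hM
    simp only [mem_filter, mem_univ, true_and] at hM ⊢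
    obtain ⟨hclosed, huniv⟩ := hM
    refine ⟨?_, ?_⟩
    · intro A hA B hB
      simp only [mem_image] at hA hB
      obtain ⟨A', hA', rfl⟩ := hA
      obtain ⟨B', hB', rfl⟩ := hB
      rw [← Finset.compl_inter]
      exact mem_image_of_mem _ (hclosed A' hA' B' hB')
    · have : (∅ : Finset (Fin n)) = (univ : Finset (Fin n))ᶜ := by simp
      rw [this]
      exact mem_image_of_mem _ huniv
  case hj =>
    intro U hU
    simp only [mem_filter, mem_univ, true_and] at hU ⊢
    obtain ⟨hclosed, hempty⟩ := hU
    refine ⟨?_, ?_⟩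
    · intro A hA B hB
      simp only [mem_image] at hA hB
      obtain ⟨A', hA', rfl⟩ := hA
      obtain ⟨B', hB', rfl⟩ := hB
      rw [← Finset.compl_union]
      exact mem_image_of_mem _ (hclosed A' hA' B' hB')
    · have : (univ : Finset (Fin n)) = (∅ : Finset (Fin n))ᶜ := by simp
      rw [this]
      exact mem_image_of_mem _ hempty
  case left_inv =>
    intro M _
    rw [Finset.image_image]
    simp [Function.comp]
  case right_inv =>
    intro U _
    rw [Finset.image_image]
    simp [Function.comp]

/-- Step 2: the number of union-closed families containing `∅` whose total union
is `T` equals `numUCS T.card`. -/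
lemma fiber_card (n : ℕ) (T : Finset (Fin n)) :
    ((univ : Finset (Finset (Finset (Fin n)))).filter
      (fun U => ((∀ A ∈ U, ∀ B ∈ U, A ∪ B ∈ U) ∧ ∅ ∈ U) ∧ U.sup id = T)).card
    = numUCS T.card := by
  classical
  set e := T.equivFin with he
  set down : Finset (Fin n) → Finset (Fin T.card) :=
    fun A => univ.filter (fun b => ((e.symm b : {x // x ∈ T}) : Fin n) ∈ A) with hdown
  set up : Finset (Fin T.card) → Finset (Fin n) :=
    fun B => B.image (fun b => ((e.symm b : {x // x ∈ T}) : Fin n)) with hup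
  have up_subset : ∀ B, up B ⊆ T := by
    intro B x hx
    simp only [hup, mem_image] at hx
    obtain ⟨b, _, rfl⟩ := hx
    exact (e.symm b).2
  have up_down : ∀ A, A ⊆ T → up (down A) = A := by
    intro A hAT
    ext x
    simp only [hup, hdown, mem_image, mem_filter, mem_univ, true_and]
    constructor
    · rintro ⟨b, hb, rfl⟩; exact hb
    · intro hx
      exact ⟨e ⟨x, hAT hx⟩, by simpa using hx, by simp⟩
  have down_up : ∀ B, down (up B) = B := by
    intro B
    ext b
    simp only [hdown, hup, mem_filter, mem_univ, true_and, mem_image]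
    constructor
    · rintro ⟨b', hb', hbb⟩
      have : e.symm b' = e.symm b := Subtype.coe_injective hbb
      rwa [e.symm.injective this] at hb'
    · intro hb; exact ⟨b, hb, rfl⟩
  have down_union : ∀ A B, down (A ∪ B) = down A ∪ down B := by
    intro A B; ext b; simp [hdown]
  have up_union : ∀ A B, up (A ∪ B) = up A ∪ up B := by
    intro A B; simp [hup, Finset.image_union]
  have down_empty : down ∅ = ∅ := by simp [hdown]
  have up_empty : up ∅ = ∅ := by simp [hup]
  have down_T : down T = univ := by
    ext b; simp only [hdown, mem_filter, mem_univ, true_and, iff_true]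
    exact (e.symm b).2
  have up_univ : up univ = T := by
    ext x
    simp only [hup, mem_image, mem_univ, true_and]
    constructor
    · rintro ⟨b, rfl⟩; exact (e.symm b).2
    · intro hx; exact ⟨e ⟨x, hx⟩, by simp⟩
  -- membership facts for families in the fiber
  have mem_subset_T : ∀ U : Finset (Finset (Fin n)), U.sup id = T →
      ∀ A ∈ U, A ⊆ T := by
    intro U hsup A hA
    have : id A ≤ U.sup id := Finset.le_sup hA
    rwa [hsup] at this
  unfold numUCS
  apply Finset.card_bij' (fun U _ => U.image down) (fun V _ => V.image up)
  case hi =>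
    intro U hU
    simp only [mem_filter, mem_univ, true_and] at hU ⊢
    obtain ⟨⟨hclosed, hempty⟩, hsup⟩ := hU
    have hTU : T ∈ U := by
      have hne : U.Nonempty := ⟨∅, hempty⟩
      have := Finset.sup'_mem (s := {A : Finset (Fin n) | A ∈ U})
        (fun x hx y hy => hclosed x hx y hy) U hne id (fun i hi => hi)
      rwa [Finset.sup'_eq_sup, hsup] at this
    refine ⟨?_, ?_, ?_⟩
    · intro A hA B hB
      simp only [mem_image] at hA hB
      obtain ⟨A', hA', rfl⟩ := hA
      obtain ⟨B', hB', rfl⟩ := hB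
      rw [← down_union]
      exact mem_image_of_mem _ (hclosed A' hA' B' hB')
    · rw [← down_T]; exact mem_image_of_mem _ hTU
    · rw [← down_empty]; exact mem_image_of_mem _ hempty
  case hj =>
    intro V hV
    simp only [mem_filter, mem_univ, true_and] at hV ⊢
    obtain ⟨hclosed, hfull, hempty⟩ := hV
    refine ⟨⟨?_, ?_⟩, ?_⟩
    · intro A hA B hB
      simp only [mem_image] at hA hB
      obtain ⟨A', hA', rfl⟩ := hA
      obtain ⟨B', hB', rfl⟩ := hB
      rw [← up_union]
      exact mem_image_of_mem _ (hclosed A' hA' B' hB')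
    · rw [← up_empty]; exact mem_image_of_mem _ hempty
    · apply le_antisymm
      · apply Finset.sup_le
        intro A hA
        simp only [mem_image] at hA
        obtain ⟨B, _, rfl⟩ := hA
        exact up_subset B
      · have h' : up univ ∈ V.image up := mem_image_of_mem _ hfull
        rw [up_univ] at h'
        exact Finset.le_sup (f := id) h'
  case left_inv =>
    intro U hU
    simp only [mem_filter, mem_univ, true_and] at hU
    obtain ⟨⟨_, _⟩, hsup⟩ := hU
    rw [Finset.image_image]
    rw [Finset.image_congr (g := id) ?_, Finset.image_id]
    intro A hA
    exact up_down A (mem_subset_T U hsup A hA)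
  case right_inv =>
    intro V _
    rw [Finset.image_image]
    rw [Finset.image_congr (g := id) ?_, Finset.image_id]
    intro B _
    exact down_up B

/-- The number of Moore families on `Ω_n` equals `Σ_{i=0}^{n} C(n,i) · u_i`,
where `u_i` is the number of union closed sets on `Ω_i`. -/
theorem numMoore_eq_sum_choose_mul_numUCS (n : ℕ) :
    numMoore n = ∑ i ∈ Finset.range (n + 1), n.choose i * numUCS i := by
  classical
  rw [numMoore_eq_card_uc]
  rw [Finset.card_eq_sum_card_fiberwise
    (f := fun U : Finset (Finset (Fin n)) => U.sup id)
    (t := (univ : Finset (Finset (Fin n)))) (fun x _ => mem_univ _)]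
  have step : ∀ T : Finset (Fin n),
      ((((univ : Finset (Finset (Finset (Fin n)))).filter
        (fun U => (∀ A ∈ U, ∀ B ∈ U, A ∪ B ∈ U) ∧ ∅ ∈ U)).filter
        (fun U => U.sup id = T)).card) = numUCS T.card := by
    intro T
    rw [Finset.filter_filter]
    exact fiber_card n T
  rw [Finset.sum_congr rfl (fun T _ => step T)]
  -- now group by cardinality
  rw [← Finset.sum_fiberwise_of_maps_to (g := fun T : Finset (Fin n) => T.card)
    (t := Finset.range (n + 1))
    (fun T _ => Finset.mem_range.mpr (Nat.lt_succ_of_le (by simpa using T.card_le_univ)))]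
  apply Finset.sum_congr rfl
  intro i _
  have hfilter : (univ : Finset (Finset (Fin n))).filter (fun T => T.card = i)
      = Finset.powersetCard i univ := by
    rw [Finset.powersetCard_eq_filter, Finset.powerset_univ]
  calc ∑ T ∈ (univ : Finset (Finset (Fin n))).filter (fun T => T.card = i), numUCS T.card
      = ∑ T ∈ (univ : Finset (Finset (Fin n))).filter (fun T => T.card = i), numUCS i := by
        apply Finset.sum_congr rfl
        intro T hT
        rw [(Finset.mem_filter.mp hT).2]
    _ = n.choose i * numUCS i := by
        rw [Finset.sum_const, hfilter, Finset.card_powersetCard]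
        simp [mul_comm]
end

section
/- The number of isomorphism classes of sparse union closed sets on a 4-element universe is exactly 2; that is, the action of the symmetric group on Ω_4 on the set of all union closed sets 𝒰 on Ω_4 whose non-empty members have average cardinality at most 2 has exactly 2 orbits. -/
/-- A union closed set on `Ω_n` is sparse if the average cardinality of its
non-empty members is at most `n/2`, i.e.
`2 · Σ_{∅≠A∈𝒰} |A| ≤ n · #{A ∈ 𝒰 | A ≠ ∅}`. -/
def IsSparse {n : ℕ} (U : Finset (Finset (Fin n))) : Prop :=
  2 * ∑ A ∈ U.filter (fun A => A ≠ ∅), A.card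
    ≤ n * (U.filter (fun A => A ≠ ∅)).card

theorem permFam_one {n : ℕ} (U : Finset (Finset (Fin n))) : permFam 1 U = U := by
  simp [permFam]

theorem permFam_mul {n : ℕ} (σ π : Equiv.Perm (Fin n)) (U : Finset (Finset (Fin n))) :
    permFam σ (permFam π U) = permFam (σ * π) U := by
  simp [permFam, Finset.image_image, Function.comp_def]

/-- Two sparse union closed sets are isomorphic iff some permutation of `Ω_n`
maps one onto the other; the isomorphism classes are the orbits of the induced
action of the symmetric group. -/
def sparseUcsSetoid (n : ℕ) :
    Setoid {U : Finset (Finset (Fin n)) // IsUCS U ∧ IsSparse U} where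
  r U V := ∃ π : Equiv.Perm (Fin n), permFam π U.1 = V.1
  iseqv := by
    constructor
    · exact fun U => ⟨1, permFam_one U.1⟩
    · rintro U V ⟨π, h⟩
      exact ⟨π⁻¹, by rw [← h, permFam_mul, inv_mul_cancel, permFam_one]⟩
    · rintro U V W ⟨π, h⟩ ⟨σ, h'⟩
      exact ⟨σ * π, by rw [← permFam_mul, h, h']⟩


instance {n : ℕ} (U : Finset (Finset (Fin n))) : Decidable (IsUCS U) := by
  unfold IsUCS; infer_instance
instance {n : ℕ} (U : Finset (Finset (Fin n))) : Decidable (IsSparse U) := by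
  unfold IsSparse; infer_instance

lemma count_key (U : Finset (Finset (Fin 4))) (hU : IsUCS U) (hS : IsSparse U) :
    (U.filter (fun A => A.card = 3)).card + 2
      ≤ (Finset.univ.filter (fun x : Fin 4 => {x} ∈ U)).card := by
  obtain ⟨hcl, hfull, hemp⟩ := hU
  set F := U.filter (fun A => A ≠ ∅) with hF
  have hsp : (∑ A ∈ F, (A.card : ℤ)) ≤ 2 * F.card := by
    have := hS
    unfold IsSparse at this
    rw [← hF] at this
    have h2 : (∑ A ∈ F, A.card) ≤ 2 * F.card := by omega
    calc (∑ A ∈ F, (A.card : ℤ)) = ((∑ A ∈ F, A.card : ℕ) : ℤ) := by push_cast; ring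
    _ ≤ 2 * F.card := by exact_mod_cast h2
  have hptw : ∀ A ∈ F, (if A.card = 3 then (1:ℤ) else 0) + 2 * (if A.card = 4 then (1:ℤ) else 0)
      - (if A.card = 1 then (1:ℤ) else 0) ≤ (A.card : ℤ) - 2 := by
    intro A hA
    have hA' : A ∈ U ∧ A ≠ ∅ := Finset.mem_filter.mp hA
    have h1 : 1 ≤ A.card := Finset.card_pos.mpr (Finset.nonempty_iff_ne_empty.mpr hA'.2)
    have h4 : A.card ≤ 4 := by
      have := Finset.card_le_univ A
      simpa using this
    split_ifs <;> push_cast <;> omega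
  have hsum : ∑ A ∈ F, ((if A.card = 3 then (1:ℤ) else 0) + 2 * (if A.card = 4 then (1:ℤ) else 0)
      - (if A.card = 1 then (1:ℤ) else 0)) ≤ ∑ A ∈ F, ((A.card : ℤ) - 2) := Finset.sum_le_sum hptw
  have hrhs : ∑ A ∈ F, ((A.card : ℤ) - 2) ≤ 0 := by
    have he : ∑ A ∈ F, ((A.card : ℤ) - 2) = (∑ A ∈ F, (A.card : ℤ)) - 2 * F.card := by
      rw [Finset.sum_sub_distrib, Finset.sum_const, nsmul_eq_mul]; ring
    rw [he]; linarith
  have hlhs : ∑ A ∈ F, ((if A.card = 3 then (1:ℤ) else 0) + 2 * (if A.card = 4 then (1:ℤ) else 0)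
      - (if A.card = 1 then (1:ℤ) else 0))
      = (F.filter (fun A => A.card = 3)).card
        + 2 * (F.filter (fun A => A.card = 4)).card
        - (F.filter (fun A => A.card = 1)).card := by
    rw [Finset.sum_sub_distrib, Finset.sum_add_distrib, ← Finset.mul_sum]
    rw [Finset.sum_boole, Finset.sum_boole, Finset.sum_boole]
  have c4 : 1 ≤ (F.filter (fun A => A.card = 4)).card := by
    refine Finset.card_pos.mpr ⟨Finset.univ, ?_⟩
    refine Finset.mem_filter.mpr ⟨?_, by decide⟩
    rw [hF]
    exact Finset.mem_filter.mpr ⟨hfull, by decide⟩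
  have c3 : F.filter (fun A => A.card = 3) = U.filter (fun A => A.card = 3) := by
    ext A
    constructor
    · intro hA
      obtain ⟨h1, h2⟩ := Finset.mem_filter.mp hA
      rw [hF] at h1
      exact Finset.mem_filter.mpr ⟨(Finset.mem_filter.mp h1).1, h2⟩
    · intro hA
      obtain ⟨h1, h2⟩ := Finset.mem_filter.mp hA
      refine Finset.mem_filter.mpr ⟨?_, h2⟩
      rw [hF]
      refine Finset.mem_filter.mpr ⟨h1, ?_⟩
      intro he
      rw [he] at h2
      simp at h2
  have c1 : (F.filter (fun A => A.card = 1)).card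
      = (Finset.univ.filter (fun x : Fin 4 => {x} ∈ U)).card := by
    have himg : F.filter (fun A => A.card = 1)
        = (Finset.univ.filter (fun x : Fin 4 => {x} ∈ U)).image
            (fun x => ({x} : Finset (Fin 4))) := by
      ext B
      constructor
      · intro hB
        obtain ⟨hBF, hc⟩ := Finset.mem_filter.mp hB
        rw [hF, Finset.mem_filter] at hBF
        obtain ⟨a, rfl⟩ := Finset.card_eq_one.mp hc
        exact Finset.mem_image.mpr ⟨a, Finset.mem_filter.mpr ⟨Finset.mem_univ _, hBF.1⟩, rfl⟩
      · intro hB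
        obtain ⟨a, ha, rfl⟩ := Finset.mem_image.mp hB
        have haU := (Finset.mem_filter.mp ha).2
        refine Finset.mem_filter.mpr ⟨?_, by simp⟩
        rw [hF, Finset.mem_filter]
        exact ⟨haU, by simp⟩
    rw [himg, Finset.card_image_of_injective _ Finset.singleton_injective]
  rw [hlhs, c3, c1] at hsum
  have := hsum.trans hrhs
  omega

lemma classify (U : Finset (Finset (Fin 4))) (hU : IsUCS U) (hS : IsSparse U) :
    (∃ x y : Fin 4, x ≠ y ∧ U = {∅, {x}, {y}, {x, y}, Finset.univ}) ∨
    (∃ s : Finset (Fin 4), s.card = 3 ∧ U = insert Finset.univ s.powerset) := by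
  obtain ⟨hcl, hfull, hemp⟩ := hU
  set s := Finset.univ.filter (fun x : Fin 4 => {x} ∈ U) with hs
  have hmem : ∀ x : Fin 4, x ∈ s ↔ {x} ∈ U := by
    intro x; rw [hs, Finset.mem_filter]; simp
  have key := count_key U ⟨hcl, hfull, hemp⟩ hS
  rw [← hs] at key
  have hcard4 : ∀ A : Finset (Fin 4), A.card ≤ 4 := by
    intro A
    have := Finset.card_le_univ A
    simpa using this
  have subclosed : ∀ B : Finset (Fin 4), B ⊆ s → B ∈ U := by
    intro B
    induction B using Finset.induction_on with
    | empty => exact fun _ => hemp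
    | @insert a B' ha ih =>
      intro hsub
      have h1 : ({a} : Finset (Fin 4)) ∈ U :=
        (hmem a).mp (hsub (Finset.mem_insert_self a B'))
      have h2 : B' ∈ U := ih (fun x hx => hsub (Finset.mem_insert_of_mem hx))
      have := hcl _ h1 _ h2
      rwa [← Finset.insert_eq] at this
  have hm4 : s.card ≤ 4 := hcard4 s
  have hcases : s.card = 2 ∨ s.card = 3 ∨ s.card = 4 := by omega
  rcases hcases with h2 | h3 | h4
  · -- two singletons
    obtain ⟨x, y, hxy, hsxy⟩ := Finset.card_eq_two.mp h2
    have t0 : U.filter (fun A => A.card = 3) = ∅ := by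
      rw [← Finset.card_eq_zero]; omega
    have notriple : ∀ A ∈ U, A.card ≠ 3 := by
      intro A hA h3c
      have : A ∈ U.filter (fun A => A.card = 3) :=
        Finset.mem_filter.mpr ⟨hA, h3c⟩
      rw [t0] at this
      simp at this
    have hxU : ({x} : Finset (Fin 4)) ∈ U := (hmem x).mp (by rw [hsxy]; simp)
    have hyU : ({y} : Finset (Fin 4)) ∈ U := (hmem y).mp (by rw [hsxy]; simp)
    refine Or.inl ⟨x, y, hxy, ?_⟩
    ext A
    constructor
    · intro hA
      have hle := hcard4 A
      have h5 : A.card = 0 ∨ A.card = 1 ∨ A.card = 2 ∨ A.card = 3 ∨ A.card = 4 := by omega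
      rcases h5 with h | h | h | h | h
      · rw [Finset.card_eq_zero] at h
        simp [h]
      · obtain ⟨a, rfl⟩ := Finset.card_eq_one.mp h
        have : a ∈ s := (hmem a).mpr hA
        rw [hsxy] at this
        rcases Finset.mem_insert.mp this with rfl | hmem'
        · simp
        · rw [Finset.mem_singleton] at hmem'
          subst hmem'
          simp
      · -- card 2: A = {x,y}
        have hxA : x ∈ A := by
          by_contra hx
          have hu : insert x A ∈ U := by
            have := hcl _ hxU _ hA
            rwa [← Finset.insert_eq] at this
          have : (insert x A).card = 3 := by
            rw [Finset.card_insert_of_notMem hx, h]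
          exact notriple _ hu this
        have hyA : y ∈ A := by
          by_contra hy
          have hu : insert y A ∈ U := by
            have := hcl _ hyU _ hA
            rwa [← Finset.insert_eq] at this
          have : (insert y A).card = 3 := by
            rw [Finset.card_insert_of_notMem hy, h]
          exact notriple _ hu this
        have hsub : ({x, y} : Finset (Fin 4)) ⊆ A := by
          intro z hz
          rcases Finset.mem_insert.mp hz with rfl | hz'
          · exact hxA
          · rw [Finset.mem_singleton] at hz'; subst hz'; exact hyA
        have hcc : A.card ≤ ({x, y} : Finset (Fin 4)).card := by
          rw [Finset.card_pair hxy, h]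
        have := Finset.eq_of_subset_of_card_le hsub hcc
        simp [this]
      · exact absurd h (notriple A hA)
      · have : (Finset.univ : Finset (Fin 4)).card ≤ A.card := by
          simp [h]
        have := Finset.eq_of_subset_of_card_le (Finset.subset_univ A) this
        simp [this]
    · intro hA
      simp only [Finset.mem_insert, Finset.mem_singleton] at hA
      rcases hA with rfl | rfl | rfl | rfl | rfl
      · exact hemp
      · exact hxU
      · exact hyU
      · have := hcl _ hxU _ hyU
        rwa [← Finset.insert_eq] at this
      · exact hfull
  · -- three singletons
    have hsU : s ∈ U := subclosed s (le_refl s)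
    have huniq : ∀ A ∈ U, A.card = 3 → A = s := by
      intro A hA h3c
      have hA' : A ∈ U.filter (fun A => A.card = 3) := Finset.mem_filter.mpr ⟨hA, h3c⟩
      have hs' : s ∈ U.filter (fun A => A.card = 3) := Finset.mem_filter.mpr ⟨hsU, h3⟩
      have hle : (U.filter (fun A => A.card = 3)).card ≤ 1 := by omega
      exact Finset.card_le_one.mp hle _ hA' _ hs'
    refine Or.inr ⟨s, h3, ?_⟩
    ext A
    constructor
    · intro hA
      have hle := hcard4 A
      rw [Finset.mem_insert, Finset.mem_powerset]
      have h5 : A.card ≤ 2 ∨ A.card = 3 ∨ A.card = 4 := by omega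
      rcases h5 with h | h | h
      · -- A ⊆ s
        right
        rcases Nat.eq_zero_or_pos A.card with h0 | hpos
        · rw [Finset.card_eq_zero] at h0
          simp [h0]
        have hsd : (s \ A).Nonempty := by
          rw [← Finset.card_pos]
          have := Finset.le_card_sdiff A s
          omega
        obtain ⟨d, hd⟩ := hsd
        have hdU : ({d} : Finset (Fin 4)) ∈ U :=
          (hmem d).mp (Finset.mem_sdiff.mp hd).1
        have hdA : d ∉ A := (Finset.mem_sdiff.mp hd).2
        have hu : insert d A ∈ U := by
          have := hcl _ hdU _ hA
          rwa [← Finset.insert_eq] at this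
        have hc : (insert d A).card = A.card + 1 := Finset.card_insert_of_notMem hdA
        rcases Nat.lt_or_ge A.card 2 with h1 | h1
        · -- card 1
          have : A.card = 1 := by omega
          obtain ⟨a, rfl⟩ := Finset.card_eq_one.mp this
          have : a ∈ s := (hmem a).mpr hA
          simpa using this
        · -- card 2
          have h2' : A.card = 2 := by omega
          have h3' : (insert d A).card = 3 := by omega
          have := huniq _ hu h3'
          rw [← this]
          exact Finset.subset_insert d A
      · right
        rw [huniq A hA h]
      · left
        have : (Finset.univ : Finset (Fin 4)).card ≤ A.card := by simp [h]
        exact Finset.eq_of_subset_of_card_le (Finset.subset_univ A) this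
    · intro hA
      rcases Finset.mem_insert.mp hA with rfl | hA'
      · exact hfull
      · exact subclosed A (Finset.mem_powerset.mp hA')
  · -- four singletons: contradiction
    exfalso
    have hseq : s = Finset.univ := by
      apply Finset.eq_of_subset_of_card_le (Finset.subset_univ s)
      simp [h4]
    have hall : ∀ x : Fin 4, ({x} : Finset (Fin 4)) ∈ U := by
      intro x
      exact (hmem x).mp (by rw [hseq]; exact Finset.mem_univ x)
    have htr : ∀ B : Finset (Fin 4), B ∈ U := by
      intro B
      apply subclosed
      rw [hseq]
      exact Finset.subset_univ B
    have hsub3 : ({({0,1,2} : Finset (Fin 4)), {0,1,3}, {0,2,3}} : Finset (Finset (Fin 4)))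
        ⊆ U.filter (fun A => A.card = 3) := by
      intro A hA
      simp only [Finset.mem_insert, Finset.mem_singleton] at hA
      rcases hA with rfl | rfl | rfl <;>
        exact Finset.mem_filter.mpr ⟨htr _, by decide⟩
    have h3le : 3 ≤ (U.filter (fun A => A.card = 3)).card := by
      have := Finset.card_le_card hsub3
      have hc : ({({0,1,2} : Finset (Fin 4)), {0,1,3}, {0,2,3}} : Finset (Finset (Fin 4))).card = 3 := by decide
      omega
    omega

def R1 : Finset (Finset (Fin 4)) := {∅, {0}, {1}, {0, 1}, Finset.univ}
def R2 : Finset (Finset (Fin 4)) := insert Finset.univ ({0, 1, 2} : Finset (Fin 4)).powerset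

lemma R1_ok : IsUCS R1 ∧ IsSparse R1 := by decide
lemma R2_ok : IsUCS R2 ∧ IsSparse R2 := by decide

lemma perm2 : ∀ x y : Fin 4, x ≠ y →
    ∃ π : Equiv.Perm (Fin 4), π 0 = x ∧ π 1 = y := by decide

lemma perm3 : ∀ x y z : Fin 4, x ≠ y → x ≠ z → y ≠ z →
    ∃ π : Equiv.Perm (Fin 4), π 0 = x ∧ π 1 = y ∧ π 2 = z := by decide

lemma pow_img (π : Equiv.Perm (Fin 4)) (s : Finset (Fin 4)) :
    s.powerset.image (fun A => A.image π) = (s.image π).powerset := by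
  ext B
  simp only [Finset.mem_image, Finset.mem_powerset]
  constructor
  · rintro ⟨C, hC, rfl⟩
    exact Finset.image_subset_image hC
  · intro hB
    refine ⟨B.image π.symm, ?_, ?_⟩
    · intro a ha
      obtain ⟨b, hb, rfl⟩ := Finset.mem_image.mp ha
      obtain ⟨c, hc, hcb⟩ := Finset.mem_image.mp (hB hb)
      rw [← hcb]
      simpa using hc
    · rw [Finset.image_image]
      have : (π : Fin 4 → Fin 4) ∘ (π.symm : Fin 4 → Fin 4) = id := by
        funext a; simp
      rw [this, Finset.image_id]

lemma permFam_R1 (π : Equiv.Perm (Fin 4)) :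
    permFam π R1 = {∅, {π 0}, {π 1}, {π 0, π 1}, Finset.univ} := by
  simp [permFam, R1, Finset.image_insert, Finset.image_univ_equiv]

lemma permFam_R2 (π : Equiv.Perm (Fin 4)) :
    permFam π R2 = insert Finset.univ ({π 0, π 1, π 2} : Finset (Fin 4)).powerset := by
  simp only [permFam, R2, Finset.image_insert, pow_img, Finset.image_univ_equiv,
    Finset.image_singleton]

lemma card_permFam (π : Equiv.Perm (Fin 4)) (U : Finset (Finset (Fin 4))) :
    (permFam π U).card = U.card :=
  Finset.card_image_of_injective _ (Finset.image_injective π.injective)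


/-- The symmetric group on `Ω_4` acting on the sparse union closed sets on `Ω_4`
(those whose non-empty members have average cardinality at most 2) has exactly
2 orbits: there are 2 isomorphism classes of sparse union closed sets on a
4-element universe. -/
theorem card_sparse_ucs_orbits_four :
    Nat.card (Quotient (sparseUcsSetoid 4)) = 2 := by
  rw [Nat.card_eq_two_iff]
  refine ⟨⟦⟨R1, R1_ok⟩⟧, ⟦⟨R2, R2_ok⟩⟧, ?_, ?_⟩
  · intro h
    obtain ⟨π, hπ⟩ := Quotient.exact h
    have := card_permFam π R1
    rw [hπ] at this
    revert this
    decide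
  · apply Set.eq_univ_of_forall
    intro q
    induction q using Quotient.ind with
    | _ e =>
      obtain ⟨U, hU, hS⟩ := e
      rcases classify U hU hS with ⟨x, y, hxy, rfl⟩ | ⟨s, hs3, rfl⟩
      · left
        refine (Quotient.sound ?_).symm
        obtain ⟨π, h0, h1⟩ := perm2 x y hxy
        exact ⟨π, by rw [permFam_R1, h0, h1]⟩
      · right
        refine (Quotient.sound ?_).symm
        obtain ⟨x, y, z, hxy, hxz, hyz, rfl⟩ := Finset.card_eq_three.mp hs3
        obtain ⟨π, h0, h1, h2⟩ := perm3 x y z hxy hxz hyz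
        exact ⟨π, by rw [permFam_R2, h0, h1, h2]⟩
end
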